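/- Define τ_P(n) to be the minimum number k such that n can be written as a sum of k (not necessarily distinct) numbers each of the form 2^d − 1 with d ≥ 1. Then the greedy algorithm is optimal: τ_P satisfies τ_P(2^k − 1) = 1 for all k ≥ 1, and for n not of the form 2^k − 1, τ_P(n) = 1 + τ_P(n − (2^⌊log₂(n+1)⌋ − 1)). -/

import Mathlib

def nu (d : ℕ) : ℕ := 2 ^ d - 1

def IsABP (n : ℕ) (P : Multiset ℕ) : Prop :=
  (∀ i ∈ P, 1 ≤ i) ∧ (P.map nu).sum = n

noncomputable def tauP (n : ℕ) : ℕ :=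
  sInf {k | ∃ P : Multiset ℕ, IsABP n P ∧ P.card = k}

def IsSABP (n : ℕ) (P N : Multiset ℕ) : Prop :=
  (∀ i ∈ P, 1 ≤ i) ∧ (∀ j ∈ N, 1 ≤ j) ∧
    (n : ℤ) = ((P.map nu).sum : ℤ) - ((N.map nu).sum : ℤ)

noncomputable def tau (n : ℕ) : ℕ :=
  sInf {k | ∃ P N : Multiset ℕ, IsSABP n P N ∧ P.card + N.card = k}

noncomputable def tauC (n : ℕ) : ℕ :=
  sInf {k | ∃ (r : ℕ) (N : Multiset ℕ), IsSABP n {r} N ∧ 1 + N.card = k}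

def greedy : ℕ → Multiset ℕ
  | 0 => 0
  | (n+1) => Nat.log 2 (n+2) ::ₘ greedy (n + 1 - nu (Nat.log 2 (n+2)))
  decreasing_by
    have h1 : 0 < Nat.log 2 (n+2) := Nat.log_pos one_lt_two (by omega)
    have h2 : 2 ^ 1 ≤ 2 ^ Nat.log 2 (n+2) := Nat.pow_le_pow_right (by norm_num) h1
    simp only [nu] at *
    omega

open Classical in
noncomputable def dualf (n : ℕ) : ℕ :=
  if ∃ k : ℕ, 1 ≤ k ∧ n = 2 ^ k - 1 then n else 3 * 2 ^ Nat.log 2 n - n - 2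

def parentT (v : ℕ × ℕ) : ℕ × ℕ := (v.1 + 1, v.2 / 2)

def levelT (v : ℕ × ℕ) : ℕ := v.1 + 1

def treeGraph : SimpleGraph (ℕ × ℕ) where
  Adj u v := parentT u = v ∨ parentT v = u
  symm := ⟨by intro u v h; exact Or.symm h⟩
  loopless := ⟨by intro v h; simp [parentT, Prod.ext_iff] at h⟩

noncomputable def cutCard (S : Finset (ℕ × ℕ)) : ℕ :=
  Set.ncard {v : ℕ × ℕ | ¬ ((v ∈ S) ↔ (parentT v ∈ S))}

def leafCount (S : Finset (ℕ × ℕ)) : ℕ := (S.filter (fun v => v.1 = 0)).card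

def completeSubtree (v : ℕ × ℕ) : Finset (ℕ × ℕ) :=
  (Finset.range (v.1 + 1)).biUnion (fun a =>
    (Finset.Ico (v.2 * 2 ^ (v.1 - a)) ((v.2 + 1) * 2 ^ (v.1 - a))).image (fun i => (a, i)))

def Bd (d : ℕ) : Finset (ℕ × ℕ) := completeSubtree (d - 1, 0)

def cutBd (d : ℕ) (X : Finset (ℕ × ℕ)) : ℕ :=
  ((Bd d).filter (fun v => v.1 + 1 < d ∧ ¬((v ∈ X) ↔ parentT v ∈ X))).card

noncomputable def deltaB (d i : ℕ) : ℕ :=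
  sInf {c | ∃ X ⊆ Bd d, X.card = i ∧ cutBd d X = c}

noncomputable def tauC0 (n : ℕ) : ℕ := if n = 0 then 0 else tauC n

def fS (S : Finset (ℕ × ℕ)) (v : ℕ × ℕ) : ℤ :=
  if v ∈ S ∧ parentT v ∉ S then 2 ^ levelT v - 1
  else if v ∉ S ∧ parentT v ∈ S then -(2 ^ levelT v - 1)
  else 0

/-!
Let `m = ⌊log₂ (n + 1)⌋`, so every part of an ABP of `n` is at most `m`. Since
`nu d + 1 = 2 ^ d`, the parts of an ABP `P` of `n` carry powers of two adding up to
`n + |P| ≥ 2 ^ m`, so some subfamily `S` adds up to exactly `2 ^ m`, i.e. has value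
`nu m - (|S| - 1)`. Replacing `S` by the single part `m` and lowering the rest by `|S| - 1`,
at the cost of at most one part per unit, gives an ABP of `n - nu m` with fewer parts than `P`.
-/

lemma nu_add_one (d : ℕ) : nu d + 1 = 2 ^ d := by
  have : 1 ≤ 2 ^ d := Nat.one_le_two_pow
  unfold nu
  omega

lemma nu_succ (d : ℕ) : nu (d + 1) = 2 * nu d + 1 := by
  have := nu_add_one d
  have := nu_add_one (d + 1)
  rw [pow_succ] at *
  omega

lemma sum_map_two_pow_eq (P : Multiset ℕ) :
    (P.map (2 ^ ·)).sum = (P.map nu).sum + P.card := by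
  induction P using Multiset.induction with
  | empty => simp
  | cons d P ih =>
    simp only [Multiset.map_cons, Multiset.sum_cons, Multiset.card_cons, ih, ← nu_add_one d]
    ring

lemma exists_le_sum_map_two_pow_eq (m : ℕ) (D : Multiset ℕ) (hD : ∀ d ∈ D, d ≤ m)
    (hsum : 2 ^ m ≤ (D.map (2 ^ ·)).sum) : ∃ S ≤ D, (S.map (2 ^ ·)).sum = 2 ^ m := by
  induction m generalizing D with
  | zero =>
    obtain ⟨d, hd⟩ := Multiset.exists_mem_of_ne_zero (show D ≠ 0 by rintro rfl; simp at hsum)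
    obtain rfl : d = 0 := Nat.le_zero.mp (hD d hd)
    exact ⟨{0}, Multiset.singleton_le.mpr hd, by simp⟩
  | succ m ih =>
    by_cases hm : m + 1 ∈ D
    · exact ⟨{m + 1}, Multiset.singleton_le.mpr hm, by simp⟩
    have hD' : ∀ d ∈ D, d ≤ m := fun d hd =>
      Nat.le_of_lt_succ (lt_of_le_of_ne (hD d hd) fun h => hm (by subst h; exact hd))
    obtain ⟨S₁, hS₁, hsum₁⟩ :=
      ih D hD' (le_trans (Nat.pow_le_pow_right two_pos m.le_succ) hsum)
    obtain ⟨R, rfl⟩ := Multiset.le_iff_exists_add.mp hS₁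
    simp only [Multiset.map_add, Multiset.sum_add, hsum₁, pow_succ] at hsum
    obtain ⟨S₂, hS₂, hsum₂⟩ :=
      ih R (fun d hd => hD' d (Multiset.mem_add.mpr (Or.inr hd))) (by omega)
    refine ⟨S₁ + S₂, add_le_add_right hS₂ S₁, ?_⟩
    rw [Multiset.map_add, Multiset.sum_add, hsum₁, hsum₂, pow_succ, mul_two]

lemma isABP_replicate (n : ℕ) : IsABP n (Multiset.replicate n 1) :=
  ⟨fun i hi => (Multiset.eq_of_mem_replicate hi).ge, by simp [nu]⟩

lemma IsABP.cons {v d : ℕ} {P : Multiset ℕ} (h : IsABP v P) (hd : 1 ≤ d) :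
    IsABP (nu d + v) (d ::ₘ P) :=
  ⟨by simpa [hd] using h.1, by simp [h.2]⟩

lemma IsABP.le_log_of_mem {n d : ℕ} {P : Multiset ℕ} (h : IsABP n P) (hd : d ∈ P) :
    d ≤ Nat.log 2 (n + 1) := by
  have hle : nu d ≤ n :=
    h.2 ▸ Multiset.le_sum_of_mem (Multiset.mem_map_of_mem nu hd)
  have := nu_add_one d
  exact Nat.le_log_of_pow_le one_lt_two (by omega)

lemma IsABP.ne_zero {v : ℕ} {P : Multiset ℕ} (h : IsABP v P) (hv : 1 ≤ v) : P ≠ 0 := by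
  rintro rfl
  have := h.2
  simp only [Multiset.map_zero, Multiset.sum_zero] at this
  omega

/-- Drop a part `1`, or split a part `e + 1` into two parts `e`: `2 * nu e = nu (e + 1) - 1`. -/
lemma IsABP.pred {v : ℕ} {P : Multiset ℕ} (h : IsABP v P) (hv : 1 ≤ v) :
    ∃ Q, IsABP (v - 1) Q ∧ Q.card ≤ P.card + 1 := by
  obtain ⟨d, hd⟩ := Multiset.exists_mem_of_ne_zero (h.ne_zero hv)
  obtain ⟨hpos, hsum⟩ := h
  obtain ⟨R, rfl⟩ := Multiset.exists_cons_of_mem hd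
  simp only [Multiset.mem_cons, forall_eq_or_imp] at hpos
  obtain ⟨hd1, hR⟩ := hpos
  simp only [Multiset.map_cons, Multiset.sum_cons] at hsum
  obtain rfl | ⟨e, he, rfl⟩ : d = 1 ∨ ∃ e, 1 ≤ e ∧ d = e + 1 :=
    (eq_or_lt_of_le hd1).imp Eq.symm fun h => ⟨d - 1, by omega, by omega⟩
  · refine ⟨R, ⟨hR, ?_⟩, by simp only [Multiset.card_cons]; omega⟩
    rw [show nu 1 = 1 from rfl] at hsum
    omega
  · refine ⟨e ::ₘ e ::ₘ R, ⟨?_, ?_⟩, by simp⟩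
    · simpa [he] using hR
    · simp only [Multiset.map_cons, Multiset.sum_cons]
      rw [nu_succ] at hsum
      omega

lemma IsABP.sub {v : ℕ} {P : Multiset ℕ} (h : IsABP v P) {j : ℕ} (hj : j ≤ v) :
    ∃ Q, IsABP (v - j) Q ∧ Q.card ≤ P.card + j := by
  induction j with
  | zero => exact ⟨P, h, le_rfl⟩
  | succ j ih =>
    obtain ⟨Q, hQ, hQc⟩ := ih (by omega)
    obtain ⟨Q', hQ', hQ'c⟩ := hQ.pred (by omega)
    exact ⟨Q', by rwa [Nat.sub_sub] at hQ', by omega⟩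

lemma IsABP.exists_card_lt {n : ℕ} {P : Multiset ℕ} (h : IsABP n P) (hn : 1 ≤ n) :
    ∃ Q, IsABP (n - nu (Nat.log 2 (n + 1))) Q ∧ Q.card < P.card := by
  set m := Nat.log 2 (n + 1)
  have hm : 2 ^ m ≤ n + 1 := Nat.pow_log_le_self 2 (by omega)
  have hcard : 1 ≤ P.card := Multiset.card_pos.mpr (h.ne_zero hn)
  have htotal : 2 ^ m ≤ (P.map (2 ^ ·)).sum := by rw [sum_map_two_pow_eq, h.2]; omega
  obtain ⟨S, hSP, hS⟩ := exists_le_sum_map_two_pow_eq m P (fun d => h.le_log_of_mem) htotal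
  obtain ⟨R, rfl⟩ := Multiset.le_iff_exists_add.mp hSP
  have hSnu := sum_map_two_pow_eq S
  have hS1 : 1 ≤ S.card := Multiset.card_pos.mpr <| by
    rintro rfl
    simp only [Multiset.map_zero, Multiset.sum_zero] at hS
    exact (pow_pos two_pos m).ne' hS.symm
  have hR : IsABP (R.map nu).sum R :=
    ⟨fun i hi => h.1 i (Multiset.mem_add.mpr (Or.inr hi)), rfl⟩
  have hsum := h.2
  have hnu := nu_add_one m
  simp only [Multiset.map_add, Multiset.sum_add] at hsum
  obtain ⟨Q, hQ, hQc⟩ := hR.sub (j := S.card - 1) (by omega)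
  refine ⟨Q, ?_, by simp only [Multiset.card_add]; omega⟩
  convert hQ using 1
  omega

lemma exists_isABP_card_eq_tauP (n : ℕ) : ∃ P, IsABP n P ∧ P.card = tauP n :=
  Nat.sInf_mem (s := {k | ∃ P, IsABP n P ∧ P.card = k}) ⟨_, _, isABP_replicate n, rfl⟩

lemma tauP_le_card {n : ℕ} {P : Multiset ℕ} (h : IsABP n P) : tauP n ≤ P.card :=
  Nat.sInf_le ⟨P, h, rfl⟩

lemma tauP_zero : tauP 0 = 0 :=
  Nat.eq_zero_of_le_zero (tauP_le_card (show IsABP 0 0 from ⟨by simp, by simp⟩))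

theorem tauP_eq_one_add {n : ℕ} (hn : 1 ≤ n) :
    tauP n = 1 + tauP (n - nu (Nat.log 2 (n + 1))) := by
  obtain ⟨P, hP, hPc⟩ := exists_isABP_card_eq_tauP n
  obtain ⟨R, hR, hRc⟩ := hP.exists_card_lt hn
  have hlower := tauP_le_card hR
  set m := Nat.log 2 (n + 1)
  have hm : 2 ^ m ≤ n + 1 := Nat.pow_log_le_self 2 (by omega)
  have hm1 : 1 ≤ m := Nat.le_log_of_pow_le one_lt_two (by omega)
  have hnu := nu_add_one m
  obtain ⟨Q, hQ, hQc⟩ := exists_isABP_card_eq_tauP (n - nu m)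
  have hupper := tauP_le_card (hQ.cons hm1)
  rw [Nat.add_sub_cancel' (by omega), Multiset.card_cons, hQc] at hupper
  omega

theorem stmt2 :
    (∀ k : ℕ, 1 ≤ k → tauP (2 ^ k - 1) = 1) ∧
    (∀ n : ℕ, 1 ≤ n → (¬ ∃ k : ℕ, 1 ≤ k ∧ n = 2 ^ k - 1) →
      tauP n = 1 + tauP (n - (2 ^ Nat.log 2 (n + 1) - 1))) := by
  refine ⟨fun k hk => ?_, fun n hn _ => tauP_eq_one_add hn⟩
  have hk' : 2 ≤ 2 ^ k := le_trans (by norm_num) (Nat.pow_le_pow_right two_pos hk)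
  have hlog : Nat.log 2 (2 ^ k - 1 + 1) = k := by
    rw [Nat.sub_add_cancel Nat.one_le_two_pow, Nat.log_pow one_lt_two]
  rw [tauP_eq_one_add (by omega), hlog, nu, Nat.sub_self, tauP_zero]
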